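/- arXiv:1804.01950 — 4 statements merged into one kernel-verified Lean document; each statement's English description precedes it below -/
import Mathlib

section
/- Let G be an r×n matrix over F₂, e ∈ F₂ⁿ, and K ∈ ℝ. Then the partition function admits the high-temperature (MacWilliams-type) expansion Z_e(G;K) = 2^r (cosh K)^n · Σ_{v ∈ F₂ⁿ, G vᵀ = 0} (−1)^{Σ_{b=1}^n lift(e_b)·lift(v_b)} (tanh K)^{|v|}. -/
open Matrix Filter

/-- Partition function `Z_e(G;K)` of the random-bond Ising model in Wegner's form. -/
noncomputable def Zf {ρ : Type*} [Fintype ρ] [DecidableEq ρ] {n : ℕ}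
    (G : Matrix ρ (Fin n) (ZMod 2)) (e : Fin n → ZMod 2) (K : ℝ) : ℝ :=
  ∑ α : ρ → ZMod 2,
    Real.exp (K * ∑ b : Fin n, (-1 : ℝ) ^ ((e b).val + ((Matrix.vecMul α G) b).val))

/-- `Hs` is an adapted dual of `H`: it stacks `G` on top of `k` extra rows, and its
row space equals `C_H^⊥ = {c | H cᵀ = 0}`. -/
def IsAdaptedDual {rG rH k n : ℕ} (G : Matrix (Fin rG) (Fin n) (ZMod 2))
    (H : Matrix (Fin rH) (Fin n) (ZMod 2))
    (Hs : Matrix (Fin rG ⊕ Fin k) (Fin n) (ZMod 2)) : Prop :=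
  (∀ i, Hs (Sum.inl i) = G i) ∧
  LinearMap.range Hs.vecMulLinear = LinearMap.ker H.mulVecLin

/-- Homological difference `ΔF_e(G,H;K) = ln Z_e(H*;K) − ln Z_e(G;K)`. -/
noncomputable def deltaF {ρ ρ' : Type*} [Fintype ρ] [DecidableEq ρ] [Fintype ρ'] [DecidableEq ρ'] {n : ℕ}
    (G : Matrix ρ (Fin n) (ZMod 2)) (Hs : Matrix ρ' (Fin n) (ZMod 2))
    (e : Fin n → ZMod 2) (K : ℝ) : ℝ :=
  Real.log (Zf Hs e K) - Real.log (Zf G e K)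

/-- Disorder average `[X_e]_p = Σ_e p^{|e|}(1−p)^{n−|e|} X_e`. -/
noncomputable def davg {n : ℕ} (p : ℝ) (X : (Fin n → ZMod 2) → ℝ) : ℝ :=
  ∑ e : Fin n → ZMod 2, p ^ hammingNorm e * (1 - p) ^ (n - hammingNorm e) * X e

/-- Average success probability of maximum-likelihood decoding. -/
noncomputable def Psucc {ρ ρ' : Type*} [Fintype ρ] [DecidableEq ρ] [Fintype ρ'] [DecidableEq ρ'] {n : ℕ}
    (G : Matrix ρ (Fin n) (ZMod 2)) (Hs : Matrix ρ' (Fin n) (ZMod 2))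
    (K p : ℝ) : ℝ :=
  davg p (fun e => Zf G e K / Zf Hs e K)

/-- CSS distance `d_G`: minimum Hamming weight of a vector `c` with `H cᵀ = 0`
that is not in the row space of `G`. -/
noncomputable def dCSS {rG rH n : ℕ} (G : Matrix (Fin rG) (Fin n) (ZMod 2))
    (H : Matrix (Fin rH) (Fin n) (ZMod 2)) : ℕ :=
  sInf {w | ∃ c : Fin n → ZMod 2,
    H.mulVec c = 0 ∧ (¬ ∃ α, Matrix.vecMul α G = c) ∧ hammingNorm c = w}

/-!
Each Boltzmann factor is `exp (K σ) = cosh K · (1 + σ tanh K)` for a sign `σ = ±1`, which we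
write as `cosh K · ∑_{t ∈ 𝔽₂} σ^t (tanh K)^t`. Multiplying out over the `n` bits turns `Z_e` into
a sum over `v ∈ 𝔽₂ⁿ` of `(-1)^{(e + αG)·v} (tanh K)^{|v|}`, and since `(αG)·v = α·(Gvᵀ)`, the sum
over `α` is a character sum that equals `2^r` when `Gvᵀ = 0` and vanishes otherwise.
-/

open Finset Real

lemma AddChar.map_sum_eq_prod {A M ι : Type*} [AddCommMonoid A] [CommMonoid M]
    (ψ : AddChar A M) (s : Finset ι) (f : ι → A) : ψ (∑ i ∈ s, f i) = ∏ i ∈ s, ψ (f i) := by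
  classical
  induction s using Finset.induction_on with
  | empty => simp
  | insert a s ha ih => rw [sum_insert ha, prod_insert ha, AddChar.map_add_eq_mul, ih]

lemma ZMod.eq_zero_or_eq_one (x : ZMod 2) : x = 0 ∨ x = 1 := by decide +revert

noncomputable def signChar : AddChar (ZMod 2) ℝ := AddChar.zmodChar 2 neg_one_sq

lemma signChar_apply (x : ZMod 2) : signChar x = (-1) ^ x.val := rfl

lemma signChar_one : signChar 1 = -1 := pow_one (-1)

lemma signChar_natCast (m : ℕ) : signChar m = (-1) ^ m := AddChar.zmodChar_apply' _ m

lemma signChar_dotProduct {ι : Type*} [Fintype ι] (x v : ι → ZMod 2) :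
    signChar (x ⬝ᵥ v) = (-1) ^ ∑ i, (x i).val * (v i).val := by
  rw [← signChar_natCast]
  push_cast [ZMod.natCast_val, ZMod.cast_id]
  rfl

lemma sum_val_eq_hammingNorm {ι : Type*} [Fintype ι] (v : ι → ZMod 2) :
    ∑ i, (v i).val = hammingNorm v := by
  rw [hammingNorm, card_filter]
  refine sum_congr rfl fun i _ => ?_
  generalize v i = a
  fin_cases a <;> rfl

lemma exp_mul_signChar (K : ℝ) (x : ZMod 2) :
    exp (K * signChar x) = cosh K * ∑ t : ZMod 2, signChar (x * t) * tanh K ^ t.val := by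
  have hsinh : cosh K * tanh K = sinh K := by
    rw [tanh_eq_sinh_div_cosh, mul_div_cancel₀ _ (cosh_pos K).ne']
  have hsum (f : ZMod 2 → ℝ) : ∑ t, f t = f 0 + f 1 := Fin.sum_univ_two f
  obtain rfl | rfl := x.eq_zero_or_eq_one
  all_goals simp only [hsum, zero_mul, mul_zero, mul_one, ZMod.val_zero, ZMod.val_one, pow_zero,
    pow_one, AddChar.map_zero_eq_one, signChar_one]
  · rw [← cosh_add_sinh, ← hsinh]; ring
  · rw [mul_neg_one, ← cosh_sub_sinh, ← hsinh]; ring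

lemma exp_mul_sum_signChar {ι : Type*} [Fintype ι] [DecidableEq ι] (K : ℝ) (x : ι → ZMod 2) :
    exp (K * ∑ i, signChar (x i)) =
      cosh K ^ Fintype.card ι * ∑ v : ι → ZMod 2, signChar (x ⬝ᵥ v) * tanh K ^ hammingNorm v := by
  rw [mul_sum, exp_sum]
  simp_rw [exp_mul_signChar, prod_mul_distrib, prod_const, card_univ,
    Fintype.prod_sum, prod_mul_distrib, prod_pow_eq_pow_sum, sum_val_eq_hammingNorm,
    ← AddChar.map_sum_eq_prod]
  rfl

lemma sum_signChar_dotProduct {ι : Type*} [Fintype ι] [DecidableEq ι] (u : ι → ZMod 2) :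
    ∑ α : ι → ZMod 2, signChar (α ⬝ᵥ u) = if u = 0 then 2 ^ Fintype.card ι else 0 := by
  let ψ := signChar.compAddMonoidHom (AddMonoidHom.mk' (· ⬝ᵥ u) fun a b => add_dotProduct a b u)
  have hψ : ψ = 0 ↔ u = 0 := by
    refine ⟨fun h => funext fun i => ?_, fun hu => AddChar.eq_zero_iff.2 fun α => ?_⟩
    · by_contra hi
      have := AddChar.eq_zero_iff.1 h (Pi.single i 1)
      norm_num [ψ, (u i).eq_zero_or_eq_one.resolve_left hi, signChar_one] at this
    · simp [ψ, hu]
  rw [show ∑ α, signChar (α ⬝ᵥ u) = ∑ α, ψ α from rfl, AddChar.sum_eq_ite]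
  simp [hψ, ZMod.card]

/-- MacWilliams-type high-temperature expansion of the partition function. -/
theorem stmt0 {r n : ℕ} (G : Matrix (Fin r) (Fin n) (ZMod 2))
    (e : Fin n → ZMod 2) (K : ℝ) :
    Zf G e K = 2 ^ r * Real.cosh K ^ n *
      ∑ v : Fin n → ZMod 2,
        if G.mulVec v = 0 then
          (-1 : ℝ) ^ (∑ b : Fin n, (e b).val * (v b).val) * Real.tanh K ^ hammingNorm v
        else 0 := by
  calc Zf G e K = ∑ α : Fin r → ZMod 2, exp (K * ∑ b, signChar ((e + vecMul α G) b)) := by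
        simp only [Zf, Pi.add_apply, AddChar.map_add_eq_mul, signChar_apply, pow_add]
    _ = cosh K ^ n * ∑ v : Fin n → ZMod 2, signChar (e ⬝ᵥ v) * tanh K ^ hammingNorm v *
          ∑ α : Fin r → ZMod 2, signChar (α ⬝ᵥ G *ᵥ v) := by
        simp_rw [exp_mul_sum_signChar, Fintype.card_fin, add_dotProduct, AddChar.map_add_eq_mul,
          dotProduct_mulVec, mul_sum]
        rw [sum_comm]
        exact sum_congr rfl fun _ _ => sum_congr rfl fun _ _ => by ring
    _ = _ := by
        simp_rw [sum_signChar_dotProduct, Fintype.card_fin, signChar_dotProduct, mul_sum]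
        refine sum_congr rfl fun v _ => ?_
        split_ifs <;> ring
end

section
/- Let (G,H) be a CSS pair with k = n − rank(G) − rank(H), let H* be an adapted dual of H, and let K ≥ 0. Then the homological difference at zero error satisfies 0 ≤ ΔF_0(G,H;K) ≤ k·ln 2; that is, Z_0(G;K) ≤ Z_0(H*;K) ≤ 2^k · Z_0(G;K). -/
open Matrix Filter

/-!
Splitting the spins of the adapted dual `H* = [G; L]` into those of `G` and of the `k` extra
rows writes `Z_0(H*) = ∑_γ Z_{γL}(G)`, a sum of `2^k` partition functions of `G`. The term
`γ = 0` gives the lower bound. For the upper bound, `Z_e(G) ≤ Z_0(G)` when `K ≥ 0`: expanding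
`exp (K s) = cosh K + s sinh K` over the bits, `Z_e(G)` becomes a sum over subsets `t` of
nonnegative coefficients times `(-1)^{∑_{b∈t} e_b}` times a character sum over the code,
and a character sum over a group is `0` or its order, hence nonnegative.
-/

open Finset

lemma neg_one_pow_zmod_two_val_add (x y : ZMod 2) :
    (-1 : ℝ) ^ (x + y).val = (-1) ^ x.val * (-1) ^ y.val := by
  rw [ZMod.val_add, ← neg_one_pow_eq_pow_mod_two, pow_add]

lemma neg_one_pow_zmod_two_val_sum {ι : Type*} (s : Finset ι) (f : ι → ZMod 2) :
    (-1 : ℝ) ^ (∑ i ∈ s, f i).val = ∏ i ∈ s, (-1) ^ (f i).val := by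
  induction s using Finset.cons_induction with
  | empty => simp
  | cons a s ha ih => rw [sum_cons, prod_cons, neg_one_pow_zmod_two_val_add, ih]

lemma neg_one_pow_le_one (m : ℕ) : (-1 : ℝ) ^ m ≤ 1 := by
  rcases Nat.even_or_odd m with h | h <;> simp [h.neg_one_pow]

lemma exp_mul_neg_one_pow_zmod_two_val (K : ℝ) (z : ZMod 2) :
    Real.exp (K * (-1) ^ z.val) = Real.cosh K + (-1) ^ z.val * Real.sinh K := by
  obtain rfl | rfl : z = 0 ∨ z = 1 := by revert z; decide
  · simp [Real.cosh_add_sinh]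
  · simp [ZMod.val_one, ← Real.cosh_sub_sinh, sub_eq_add_neg]

/-- A character sum over a finite group is either `0` or the order of the group. -/
lemma sum_neg_one_pow_val_nonneg {M : Type*} [AddGroup M] [Fintype M] (φ : M →+ ZMod 2) :
    0 ≤ ∑ m, (-1 : ℝ) ^ (φ m).val := by
  by_cases h : ∃ m₀, φ m₀ = 1
  · obtain ⟨m₀, hm₀⟩ := h
    have hneg : ∑ m, (-1 : ℝ) ^ (φ m).val = -∑ m, (-1 : ℝ) ^ (φ m).val := by
      rw [← sum_neg_distrib]
      exact Fintype.sum_equiv (Equiv.addRight m₀) _ _ fun m => by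
        simp [map_add, hm₀, neg_one_pow_zmod_two_val_add, ZMod.val_one]
    linarith
  · have hφ : ∀ m, φ m = 0 := fun m => by
      have hz : ∀ z : ZMod 2, z ≠ 1 → z = 0 := by decide
      exact hz _ fun h' => h ⟨m, h'⟩
    simp [hφ]

noncomputable def isingWeight {ι : Type*} [Fintype ι] (K : ℝ) (x : ι → ZMod 2) : ℝ :=
  Real.exp (K * ∑ b, (-1 : ℝ) ^ (x b).val)

lemma isingWeight_eq_sum_finset {ι : Type*} [Fintype ι] [DecidableEq ι] (K : ℝ)
    (x : ι → ZMod 2) :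
    isingWeight K x = ∑ t : Finset ι,
      Real.sinh K ^ #t * Real.cosh K ^ #tᶜ * (-1) ^ (∑ b ∈ t, x b).val := by
  rw [isingWeight, mul_sum, Real.exp_sum]
  simp_rw [exp_mul_neg_one_pow_zmod_two_val, add_comm (Real.cosh K), prod_add, powerset_univ,
    prod_mul_distrib, prod_const, neg_one_pow_zmod_two_val_sum, compl_eq_univ_sdiff]
  exact sum_congr rfl fun t _ => by ring

lemma Zf_eq_sum_isingWeight {ρ : Type*} [Fintype ρ] [DecidableEq ρ] {n : ℕ}
    (G : Matrix ρ (Fin n) (ZMod 2)) (e : Fin n → ZMod 2) (K : ℝ) :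
    Zf G e K = ∑ α, isingWeight K (e + α ᵥ* G) := by
  simp only [Zf, isingWeight, Pi.add_apply, neg_one_pow_zmod_two_val_add, pow_add]

/-- High-temperature expansion of the partition function. -/
lemma Zf_eq_sum_finset {ρ : Type*} [Fintype ρ] [DecidableEq ρ] {n : ℕ}
    (G : Matrix ρ (Fin n) (ZMod 2)) (e : Fin n → ZMod 2) (K : ℝ) :
    Zf G e K = ∑ t : Finset (Fin n), Real.sinh K ^ #t * Real.cosh K ^ #tᶜ *
      ((-1) ^ (∑ b ∈ t, e b).val *
        ∑ α : ρ → ZMod 2, (-1) ^ (∑ b ∈ t, (α ᵥ* G) b).val) := by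
  simp_rw [Zf_eq_sum_isingWeight, isingWeight_eq_sum_finset, Pi.add_apply, sum_add_distrib,
    neg_one_pow_zmod_two_val_add, mul_sum]
  rw [sum_comm]

lemma Zf_pos {ρ : Type*} [Fintype ρ] [DecidableEq ρ] {n : ℕ}
    (G : Matrix ρ (Fin n) (ZMod 2)) (e : Fin n → ZMod 2) (K : ℝ) :
    0 < Zf G e K :=
  sum_pos (fun _ _ => Real.exp_pos _) univ_nonempty

lemma Zf_le_Zf_zero {ρ : Type*} [Fintype ρ] [DecidableEq ρ] {n : ℕ}
    (G : Matrix ρ (Fin n) (ZMod 2)) (e : Fin n → ZMod 2) {K : ℝ} (hK : 0 ≤ K) :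
    Zf G e K ≤ Zf G 0 K := by
  rw [Zf_eq_sum_finset G e, Zf_eq_sum_finset G 0]
  refine sum_le_sum fun t _ => ?_
  have hcoeff : 0 ≤ Real.sinh K ^ #t * Real.cosh K ^ #tᶜ := by
    have := Real.sinh_nonneg_iff.2 hK
    positivity
  have hchar : 0 ≤ ∑ α : ρ → ZMod 2, (-1 : ℝ) ^ (∑ b ∈ t, (α ᵥ* G) b).val :=
    sum_neg_one_pow_val_nonneg (AddMonoidHom.mk' (fun α => ∑ b ∈ t, (α ᵥ* G) b)
      fun α β => by simp only [add_vecMul, Pi.add_apply, sum_add_distrib])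
  simp only [Pi.zero_apply, sum_const_zero, ZMod.val_zero, pow_zero, one_mul]
  exact mul_le_mul_of_nonneg_left (mul_le_of_le_one_left hchar (neg_one_pow_le_one _)) hcoeff

lemma Zf_fromRows {ρ ρ' : Type*} [Fintype ρ] [DecidableEq ρ] [Fintype ρ'] [DecidableEq ρ']
    {n : ℕ} (A : Matrix ρ (Fin n) (ZMod 2)) (B : Matrix ρ' (Fin n) (ZMod 2))
    (e : Fin n → ZMod 2) (K : ℝ) :
    Zf (fromRows A B) e K = ∑ γ, Zf A (e + γ ᵥ* B) K := by
  simp only [Zf_eq_sum_isingWeight]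
  rw [← (Equiv.sumArrowEquivProdArrow ρ ρ' (ZMod 2)).symm.sum_comp, Fintype.sum_prod_type,
    sum_comm]
  refine sum_congr rfl fun γ _ => sum_congr rfl fun α _ => ?_
  rw [show (Equiv.sumArrowEquivProdArrow ρ ρ' (ZMod 2)).symm (α, γ) = Sum.elim α γ from rfl,
    sumElim_vecMul_fromRows, add_comm (α ᵥ* A), add_assoc]

lemma Zf_le_Zf_fromRows {ρ ρ' : Type*} [Fintype ρ] [DecidableEq ρ] [Fintype ρ']
    [DecidableEq ρ'] {n : ℕ} (A : Matrix ρ (Fin n) (ZMod 2)) (B : Matrix ρ' (Fin n) (ZMod 2))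
    (e : Fin n → ZMod 2) (K : ℝ) :
    Zf A e K ≤ Zf (fromRows A B) e K := by
  rw [Zf_fromRows]
  simpa using single_le_sum (f := fun γ => Zf A (e + γ ᵥ* B) K)
    (fun γ _ => (Zf_pos A _ K).le) (mem_univ 0)

lemma Zf_fromRows_zero_le {ρ ρ' : Type*} [Fintype ρ] [DecidableEq ρ] [Fintype ρ']
    [DecidableEq ρ'] {n : ℕ} (A : Matrix ρ (Fin n) (ZMod 2)) (B : Matrix ρ' (Fin n) (ZMod 2))
    {K : ℝ} (hK : 0 ≤ K) :
    Zf (fromRows A B) 0 K ≤ 2 ^ Fintype.card ρ' * Zf A 0 K := by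
  rw [Zf_fromRows]
  calc ∑ γ : ρ' → ZMod 2, Zf A (0 + γ ᵥ* B) K
      ≤ ∑ _γ : ρ' → ZMod 2, Zf A 0 K := sum_le_sum fun γ _ => Zf_le_Zf_zero A _ hK
    _ = 2 ^ Fintype.card ρ' * Zf A 0 K := by simp [ZMod.card]

lemma IsAdaptedDual.eq_fromRows_toRows₂ {rG rH k n : ℕ}
    {G : Matrix (Fin rG) (Fin n) (ZMod 2)} {H : Matrix (Fin rH) (Fin n) (ZMod 2)}
    {Hs : Matrix (Fin rG ⊕ Fin k) (Fin n) (ZMod 2)}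
    (hHs : IsAdaptedDual G H Hs) :
    Hs = fromRows G Hs.toRows₂ := by
  conv_lhs => rw [← fromRows_toRows Hs]
  congr 1
  ext i j
  exact congrFun (hHs.1 i) j

theorem stmt2_general {rG rH k n : ℕ} (G : Matrix (Fin rG) (Fin n) (ZMod 2))
    (H : Matrix (Fin rH) (Fin n) (ZMod 2))
    (Hs : Matrix (Fin rG ⊕ Fin k) (Fin n) (ZMod 2))
    (hHs : IsAdaptedDual G H Hs) (K : ℝ) (hK : 0 ≤ K) :
    (0 ≤ deltaF G Hs 0 K ∧ deltaF G Hs 0 K ≤ k * Real.log 2) ∧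
      (Zf G 0 K ≤ Zf Hs 0 K ∧ Zf Hs 0 K ≤ 2 ^ k * Zf G 0 K) := by
  obtain ⟨L, rfl⟩ : ∃ L, Hs = fromRows G L := ⟨_, hHs.eq_fromRows_toRows₂⟩
  have hG := Zf_pos G 0 K
  have lower : Zf G 0 K ≤ Zf (fromRows G L) 0 K := Zf_le_Zf_fromRows G L 0 K
  have upper : Zf (fromRows G L) 0 K ≤ 2 ^ k * Zf G 0 K := by
    simpa using Zf_fromRows_zero_le G L hK
  refine ⟨⟨sub_nonneg.2 (Real.log_le_log hG lower), ?_⟩, lower, upper⟩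
  calc deltaF G (fromRows G L) 0 K ≤ Real.log (2 ^ k * Zf G 0 K) - Real.log (Zf G 0 K) :=
        sub_le_sub_right (Real.log_le_log (Zf_pos _ 0 K) upper) _
    _ = k * Real.log 2 := by rw [Real.log_mul (by positivity) hG.ne', Real.log_pow]; ring

/-- `0 ≤ ΔF_0(G,H;K) ≤ k ln 2`, i.e. `Z_0(G;K) ≤ Z_0(H*;K) ≤ 2^k Z_0(G;K)`. -/
theorem stmt2 {rG rH k n : ℕ} (G : Matrix (Fin rG) (Fin n) (ZMod 2))
    (H : Matrix (Fin rH) (Fin n) (ZMod 2)) (hGH : G * Hᵀ = 0)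
    (hk : k = n - G.rank - H.rank)
    (Hs : Matrix (Fin rG ⊕ Fin k) (Fin n) (ZMod 2))
    (hHs : IsAdaptedDual G H Hs) (K : ℝ) (hK : 0 ≤ K) :
    (0 ≤ deltaF G Hs 0 K ∧ deltaF G Hs 0 K ≤ k * Real.log 2) ∧
      (Zf G 0 K ≤ Zf Hs 0 K ∧ Zf Hs 0 K ≤ 2 ^ k * Zf G 0 K) :=
  stmt2_general G H Hs hHs K hK
end

section
/- Let (G,H) be a CSS pair with k = n − rank(G) − rank(H), let H* be an adapted dual of H (stacking G with k extra rows spanning C_H^⊥ together with the rows of G), and let G* be an adapted dual of G (stacking H with k extra rows spanning C_G^⊥ together with the rows of H). Then for every K > 0, with K* > 0 defined by tanh(K*) = e^{−2K}, the homological differences at zero error satisfy the duality relation ΔF_0(G,H;K) = k·ln 2 − ΔF_0(H,G;K*); explicitly, ln Z_0(H*;K) − ln Z_0(G;K) = k·ln 2 − ln Z_0(G*;K*) + ln Z_0(H;K*). -/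
open Matrix Filter

/-!
At zero disorder each partition function is a weight enumerator of a code. Writing
`exp (K s) = cosh K * (1 + s tanh K)` for `s = ±1` and summing out the spins gives
`Z₀(H*; K) ∝ ∑_{c ∈ ker H*} (tanh K)^|c|`, while grouping the terms of `Z₀(H; K*)` by the
codeword `αH` gives `∑_{c ∈ rowspace H} (e^{-2K*})^|c|`. These are the same sum, because
`ker H*` is the row space of `H` and `tanh K = e^{-2K*}`, so `ln Z₀(H*; K) - ln Z₀(H; K*)` is
explicit in `ln 2` and `ln cosh K - K*`. Adding the same identity for `(G, G*)` and using
`cosh K cosh K* = e^{K+K*}/2`, the `cosh` terms cancel and the powers of `2` leave `k ln 2`.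
-/

namespace Matrix

open LinearMap

variable {F ι ρ ρ' : Type*} [Field F] [Fintype ι]

lemma finrank_range_vecMulLinear [Fintype ρ] (M : Matrix ρ ι F) :
    Module.finrank F (range M.vecMulLinear) = M.rank := by
  rw [← mulVecLin_transpose, ← rank_transpose M]
  rfl

lemma rank_add_finrank_ker_vecMulLinear [Fintype ρ] (M : Matrix ρ ι F) :
    M.rank + Module.finrank F (ker M.vecMulLinear) = Fintype.card ρ := by
  rw [← finrank_range_vecMulLinear, finrank_range_add_finrank_ker,
    Module.finrank_fintype_fun_eq_card]

lemma rank_add_finrank_ker_mulVecLin (M : Matrix ρ ι F) :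
    M.rank + Module.finrank F (ker M.mulVecLin) = Fintype.card ι := by
  rw [rank, finrank_range_add_finrank_ker, Module.finrank_fintype_fun_eq_card]

lemma natCard_ker_vecMulLinear_mul [Fintype F] [Fintype ρ] (M : Matrix ρ ι F) :
    Nat.card (ker M.vecMulLinear) * Fintype.card F ^ M.rank = Fintype.card F ^ Fintype.card ρ := by
  rw [Module.natCard_eq_pow_finrank (K := F), Nat.card_eq_fintype_card, ← pow_add, add_comm,
    rank_add_finrank_ker_vecMulLinear]

lemma ker_mulVecLin_eq_range_vecMulLinear_of_range_eq_ker [Fintype ρ] [Fintype ρ']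
    (A : Matrix ρ ι F) (B : Matrix ρ' ι F) (h : range A.vecMulLinear = ker B.mulVecLin) :
    ker A.mulVecLin = range B.vecMulLinear := by
  have hle : range B.vecMulLinear ≤ ker A.mulVecLin := by
    rintro _ ⟨β, rfl⟩
    ext i
    have hrow : B *ᵥ A i = 0 := by
      rw [← mulVecLin_apply, ← LinearMap.mem_ker, ← h]
      classical
      exact ⟨Pi.single i 1, single_one_vecMul i A⟩
    simp [mulVec, dotProduct_comm (A i), ← dotProduct_mulVec, hrow]
  refine (Submodule.eq_of_le_of_finrank_le hle ?_).symm
  have hA := rank_add_finrank_ker_mulVecLin A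
  have hB := rank_add_finrank_ker_mulVecLin B
  rw [← finrank_range_vecMulLinear, h] at hA
  rw [finrank_range_vecMulLinear]
  omega

end Matrix

lemma IsAdaptedDual.rank_add_rank_le {rG rH k n : ℕ} {G : Matrix (Fin rG) (Fin n) (ZMod 2)}
    {H : Matrix (Fin rH) (Fin n) (ZMod 2)} {Hs : Matrix (Fin rG ⊕ Fin k) (Fin n) (ZMod 2)}
    (h : IsAdaptedDual G H Hs) : G.rank + H.rank ≤ n := by
  have hG : G = Hs.submatrix Sum.inl _root_.id := by
    ext i b
    simp [h.1]
  have hHs : Hs.rank + H.rank = n := by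
    have := H.rank_add_finrank_ker_mulVecLin
    rw [← h.2, Matrix.finrank_range_vecMulLinear, Fintype.card_fin] at this
    omega
  have := hG ▸ Matrix.rank_submatrix_le Hs Sum.inl _root_.id
  omega


namespace KramersWannier

open Finset Real

lemma sum_zmod_two {M : Type*} [AddCommMonoid M] (g : ZMod 2 → M) : ∑ a, g a = g 0 + g 1 :=
  Fin.sum_univ_two g

lemma zmod_two_eq_zero_or_eq_one (x : ZMod 2) : x = 0 ∨ x = 1 := by decide +revert

lemma neg_one_pow_eq_of_natCast_eq {m m' : ℕ} (h : (m : ZMod 2) = m') :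
    (-1 : ℝ) ^ m = (-1) ^ m' := by
  rw [neg_one_pow_eq_pow_mod_two, neg_one_pow_eq_pow_mod_two (n := m'),
    (ZMod.natCast_eq_natCast_iff' m m' 2).1 h]

lemma neg_one_pow_val_dotProduct {ι : Type*} [Fintype ι] (v w : ι → ZMod 2) :
    (-1 : ℝ) ^ (v ⬝ᵥ w).val = ∏ i, (-1 : ℝ) ^ ((v i).val * (w i).val) := by
  rw [prod_pow_eq_pow_sum]
  exact neg_one_pow_eq_of_natCast_eq (by push_cast [ZMod.natCast_zmod_val]; rfl)

lemma sum_neg_one_pow_val_dotProduct {ι : Type*} [Fintype ι] [DecidableEq ι]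
    (v : ι → ZMod 2) :
    ∑ α : ι → ZMod 2, (-1 : ℝ) ^ (α ⬝ᵥ v).val =
      if v = 0 then 2 ^ Fintype.card ι else 0 := by
  have hcoord (x : ZMod 2) :
      ∑ a : ZMod 2, (-1 : ℝ) ^ (a.val * x.val) = if x = 0 then 2 else 0 := by
    rcases zmod_two_eq_zero_or_eq_one x with rfl | rfl <;> norm_num [sum_zmod_two, ZMod.val_one]
  simp only [neg_one_pow_val_dotProduct]
  rw [← Fintype.prod_sum (fun i (a : ZMod 2) => (-1 : ℝ) ^ (a.val * (v i).val))]
  simp only [hcoord, prod_ite_zero, prod_const, card_univ, mem_univ, true_imp_iff, funext_iff,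
    Pi.zero_apply]

lemma hammingNorm_eq_sum_val {ι : Type*} [Fintype ι] (x : ι → ZMod 2) :
    hammingNorm x = ∑ i, (x i).val := by
  have hval (a : ZMod 2) : a.val = if a ≠ 0 then 1 else 0 := by fin_cases a <;> rfl
  simp only [hammingNorm, card_filter, hval]

lemma sum_neg_one_pow_val {ι : Type*} [Fintype ι] (x : ι → ZMod 2) :
    ∑ i, (-1 : ℝ) ^ (x i).val = Fintype.card ι - 2 * hammingNorm x := by
  have hval (a : ZMod 2) : (-1 : ℝ) ^ a.val = 1 - 2 * a.val := by
    rcases zmod_two_eq_zero_or_eq_one a with rfl | rfl <;> norm_num [ZMod.val_one]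
  simp only [hval, hammingNorm_eq_sum_val, sum_sub_distrib, ← mul_sum]
  push_cast
  simp

lemma exp_mul_sum_neg_one_pow_val {ι : Type*} [Fintype ι] [DecidableEq ι] (K : ℝ)
    (v : ι → ZMod 2) :
    exp (K * ∑ i, (-1 : ℝ) ^ (v i).val) =
      cosh K ^ Fintype.card ι *
        ∑ τ : ι → ZMod 2, tanh K ^ hammingNorm τ * (-1 : ℝ) ^ (v ⬝ᵥ τ).val := by
  have hsingle (x : ZMod 2) :
      exp (K * (-1) ^ x.val) =
        cosh K * ∑ t : ZMod 2, tanh K ^ t.val * (-1) ^ (x.val * t.val) := by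
    rw [sum_zmod_two, tanh_eq_sinh_div_cosh]
    rcases zmod_two_eq_zero_or_eq_one x with rfl | rfl <;>
      simp only [ZMod.val_zero, ZMod.val_one, pow_zero, pow_one, zero_mul, mul_one, one_mul] <;>
      field_simp
    · rw [cosh_add_sinh]
    · rw [← cosh_sub_sinh, sub_eq_add_neg]
  rw [mul_sum, exp_sum]
  simp only [hsingle, prod_mul_distrib, prod_const, card_univ, Fintype.prod_sum,
    prod_pow_eq_pow_sum, ← hammingNorm_eq_sum_val, neg_one_pow_val_dotProduct]

open Classical in
noncomputable def weightEnumerator {ι : Type*} [Fintype ι] [DecidableEq ι]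
    (C : Submodule (ZMod 2) (ι → ZMod 2)) (t : ℝ) : ℝ :=
  ∑ c with c ∈ C, t ^ hammingNorm c

lemma weightEnumerator_pos {ι : Type*} [Fintype ι] [DecidableEq ι]
    (C : Submodule (ZMod 2) (ι → ZMod 2)) {t : ℝ} (ht : 0 < t) : 0 < weightEnumerator C t :=
  sum_pos (fun _ _ => pow_pos ht _) ⟨0, by simp⟩

section Expansion

open LinearMap

variable {ρ : Type*} [Fintype ρ] [DecidableEq ρ] {n : ℕ}

theorem Zf_zero_eq_weightEnumerator_ker (M : Matrix ρ (Fin n) (ZMod 2)) (K : ℝ) :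
    Zf M 0 K = 2 ^ Fintype.card ρ * cosh K ^ n * weightEnumerator (ker M.mulVecLin) (tanh K) := by
  have hterm (α : ρ → ZMod 2) :
      exp (K * ∑ b, (-1 : ℝ) ^ (((0 : Fin n → ZMod 2) b).val + ((α ᵥ* M) b).val)) =
        cosh K ^ n * ∑ τ, tanh K ^ hammingNorm τ * (-1 : ℝ) ^ (α ⬝ᵥ M *ᵥ τ).val := by
    simp only [Pi.zero_apply, ZMod.val_zero, zero_add, exp_mul_sum_neg_one_pow_val,
      Fintype.card_fin, Matrix.dotProduct_mulVec]
  simp only [Zf, hterm, ← mul_sum]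
  rw [sum_comm]
  simp only [← mul_sum, sum_neg_one_pow_val_dotProduct]
  rw [weightEnumerator, sum_filter, mul_sum, mul_sum]
  refine sum_congr rfl fun τ _ => ?_
  rw [LinearMap.mem_ker, Matrix.mulVecLin_apply]
  split_ifs <;> ring

open Classical in
lemma sum_comp_vecMul {F ι β : Type*} [CommRing F] [Fintype F] [Fintype ι] [DecidableEq ι]
    [AddCommMonoid β] (M : Matrix ρ ι F) (f : (ι → F) → β) :
    ∑ α : ρ → F, f (α ᵥ* M) =
      Nat.card (ker M.vecMulLinear) • ∑ c with c ∈ range M.vecMulLinear, f c := by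
  have himage :
      univ.image (· ᵥ* M) = ({c | c ∈ range M.vecMulLinear} : Finset (ι → F)) := by
    ext c
    simp [eq_comm]
  rw [sum_comp, himage, smul_sum]
  refine sum_congr rfl fun c hc => ?_
  have hfiber : #{α | α ᵥ* M = c} = #{α | M.vecMulLinear α = 0} :=
    AddMonoidHom.card_fiber_eq_of_mem_range M.vecMulLinear (by simpa using hc) ⟨0, map_zero _⟩
  rw [hfiber, ← Fintype.card_subtype, ← Nat.card_eq_fintype_card]
  rfl

theorem Zf_zero_eq_weightEnumerator_range (M : Matrix ρ (Fin n) (ZMod 2)) (K : ℝ) :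
    Zf M 0 K = Nat.card (ker M.vecMulLinear) * exp (K * n) *
      weightEnumerator (range M.vecMulLinear) (exp (-(2 * K))) := by
  have hterm (c : Fin n → ZMod 2) :
      exp (K * ∑ b, (-1 : ℝ) ^ (((0 : Fin n → ZMod 2) b).val + (c b).val)) =
        exp (K * n) * exp (-(2 * K)) ^ hammingNorm c := by
    simp only [Pi.zero_apply, ZMod.val_zero, zero_add, sum_neg_one_pow_val, Fintype.card_fin,
      ← exp_nat_mul, ← exp_add]
    ring_nf
  simp only [Zf, hterm]
  rw [sum_comp_vecMul M (fun c => exp (K * n) * exp (-(2 * K)) ^ hammingNorm c), nsmul_eq_mul,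
    ← mul_sum, mul_assoc]
  rfl

end Expansion

lemma tanh_eq_exp_neg_two_mul_iff (K K' : ℝ) :
    tanh K' = exp (-(2 * K)) ↔ exp (2 * K) * exp (2 * K') = exp (2 * K) + exp (2 * K') + 1 := by
  have ha := exp_pos K
  have hb := exp_pos K'
  rw [tanh_eq, exp_neg, exp_neg, two_mul, two_mul, exp_add, exp_add]
  field_simp
  constructor <;> intro h <;> linarith

lemma tanh_eq_exp_neg_two_mul_comm {K K' : ℝ} (h : tanh K' = exp (-(2 * K))) :
    tanh K = exp (-(2 * K')) := by
  rw [tanh_eq_exp_neg_two_mul_iff] at h ⊢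
  linarith

lemma log_cosh_add_log_cosh {K K' : ℝ} (h : tanh K' = exp (-(2 * K))) :
    log (cosh K) + log (cosh K') = K + K' - log 2 := by
  have hkey := (tanh_eq_exp_neg_two_mul_iff K K').1 h
  have hmul : cosh K * cosh K' = exp (K + K') / 2 := by
    have ha := exp_pos K
    have hb := exp_pos K'
    rw [two_mul, two_mul, exp_add, exp_add] at hkey
    rw [cosh_eq, cosh_eq, exp_neg, exp_neg, exp_add]
    field_simp
    linear_combination -hkey
  rw [← log_mul (cosh_pos K).ne' (cosh_pos K').ne', hmul, log_div (exp_ne_zero _) two_ne_zero,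
    log_exp]

open LinearMap in
theorem log_Zf_zero_sub_log_Zf_zero {ρ ρ' : Type*} [Fintype ρ] [DecidableEq ρ] [Fintype ρ']
    [DecidableEq ρ'] {n : ℕ} (A : Matrix ρ (Fin n) (ZMod 2)) (B : Matrix ρ' (Fin n) (ZMod 2))
    (hAB : range A.vecMulLinear = ker B.mulVecLin) {K K' : ℝ} (h : tanh K = exp (-(2 * K'))) :
    log (Zf B 0 K) - log (Zf A 0 K') =
      ((Fintype.card ρ' : ℝ) - Fintype.card ρ + A.rank) * log 2 + n * (log (cosh K) - K') := by
  set W := weightEnumerator (ker B.mulVecLin) (tanh K)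
  have hW : 0 < W := weightEnumerator_pos _ (h ▸ exp_pos _)
  have hB : Zf B 0 K = 2 ^ Fintype.card ρ' * cosh K ^ n * W := Zf_zero_eq_weightEnumerator_ker B K
  have hA : Zf A 0 K' = Nat.card (ker A.vecMulLinear) * exp (K' * n) * W := by
    rw [Zf_zero_eq_weightEnumerator_range, hAB, ← h]
  have hker : 0 < Nat.card (ker A.vecMulLinear) := Nat.card_pos
  have hcard : log (Nat.card (ker A.vecMulLinear)) + A.rank * log 2 = Fintype.card ρ * log 2 := by
    have := congrArg (fun m : ℕ => log m) A.natCard_ker_vecMulLinear_mul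
    simp only [ZMod.card, Nat.cast_mul, Nat.cast_pow, Nat.cast_ofNat] at this
    rwa [log_mul (by positivity) (by positivity), log_pow, log_pow] at this
  rw [hB, hA, log_mul (by positivity) hW.ne', log_mul (by positivity) hW.ne',
    log_mul (by positivity) (by positivity), log_mul (by positivity) (by positivity), log_pow,
    log_pow, log_exp]
  linarith

end KramersWannier

open KramersWannier in
theorem stmt4_general {rG rH k n : ℕ} (G : Matrix (Fin rG) (Fin n) (ZMod 2))
    (H : Matrix (Fin rH) (Fin n) (ZMod 2))
    (hk : k = n - G.rank - H.rank)
    (Hs : Matrix (Fin rG ⊕ Fin k) (Fin n) (ZMod 2))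
    (hHs : IsAdaptedDual G H Hs)
    (Gs : Matrix (Fin rH ⊕ Fin k) (Fin n) (ZMod 2))
    (hGs : IsAdaptedDual H G Gs)
    (K Ks : ℝ)
    (hdual : Real.tanh Ks = Real.exp (-(2 * K))) :
    deltaF G Hs 0 K = k * Real.log 2 - deltaF H Gs 0 Ks := by
  have hrank : (k : ℝ) + G.rank + H.rank = n := by
    have := hHs.rank_add_rank_le
    exact_mod_cast (by omega : k + G.rank + H.rank = n)
  have hH := log_Zf_zero_sub_log_Zf_zero H Hs
    (Hs.ker_mulVecLin_eq_range_vecMulLinear_of_range_eq_ker H hHs.2).symm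
    (tanh_eq_exp_neg_two_mul_comm hdual)
  have hG := log_Zf_zero_sub_log_Zf_zero G Gs
    (Gs.ker_mulVecLin_eq_range_vecMulLinear_of_range_eq_ker G hGs.2).symm hdual
  have hcosh := log_cosh_add_log_cosh hdual
  simp only [Fintype.card_sum, Fintype.card_fin, Nat.cast_add] at hH hG
  unfold deltaF
  linear_combination hH + hG + n * hcosh + Real.log 2 * hrank

/-- Kramers–Wannier duality of the homological difference:
`ΔF_0(G,H;K) = k ln 2 − ΔF_0(H,G;K*)` where `tanh K* = e^{−2K}`. -/
theorem stmt4 {rG rH k n : ℕ} (G : Matrix (Fin rG) (Fin n) (ZMod 2))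
    (H : Matrix (Fin rH) (Fin n) (ZMod 2)) (hGH : G * Hᵀ = 0)
    (hk : k = n - G.rank - H.rank)
    (Hs : Matrix (Fin rG ⊕ Fin k) (Fin n) (ZMod 2))
    (hHs : IsAdaptedDual G H Hs)
    (Gs : Matrix (Fin rH ⊕ Fin k) (Fin n) (ZMod 2))
    (hGs : IsAdaptedDual H G Gs)
    (K Ks : ℝ) (hK : 0 < K) (hKs : 0 < Ks)
    (hdual : Real.tanh Ks = Real.exp (-(2 * K))) :
    deltaF G Hs 0 K = k * Real.log 2 - deltaF H Gs 0 Ks :=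
  stmt4_general G H hk Hs hHs Gs hGs K Ks hdual
end

section
/- (Lemma 1, part b.) Let (G_t,H_t), t ∈ ℕ, be a sequence of CSS pairs with block lengths n_t → ∞, k_t = n_t − rank(G_t) − rank(H_t), and suppose the rates k_t/n_t converge to some R ≥ 0. Fix K > 0 and 0 ≤ p ≤ 1. If liminf_{t→∞} [ΔF_e(G_t,H_t;K)]_p / n_t > 0, then limsup_{t→∞} P_succ(G_t,H_t;K,p) < 1; in particular P_succ(G_t,H_t;K,p) does not converge to 1. -/
open Matrix Filter

/-! `ΔF_e ∈ [0, C n]` with `C = ln 2 + 2K`: the lower bound because the sum defining `Z_e(H*)`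
contains that of `Z_e(G)`, the upper one because every Boltzmann weight lies in
`[e^{-Kn}, e^{Kn}]` and `H*` has only `k ≤ n` more rows than `G`. Since
`Z_e(G)/Z_e(H*) = e^{-ΔF_e} ≤ 1 / (1 + ΔF_e / n) ≤ 1 - ΔF_e / ((1 + C) n)`, averaging gives
`P_succ ≤ 1 - [ΔF_e]_p / ((1 + C) n)`, which keeps `P_succ` away from `1` as soon as
`[ΔF_e]_p / n` is bounded away from `0`. -/

open Real

section PartitionFunction

variable {ρ : Type*} [Fintype ρ] [DecidableEq ρ] {n : ℕ}
  (G : Matrix ρ (Fin n) (ZMod 2)) (e : Fin n → ZMod 2)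

theorem Zf_pos_s9 (K : ℝ) : 0 < Zf G e K :=
  Finset.sum_pos (fun _ _ => exp_pos _) Finset.univ_nonempty

theorem abs_mul_sum_neg_one_pow_le {K : ℝ} (hK : 0 ≤ K) (f : Fin n → ℕ) :
    |K * ∑ b, (-1 : ℝ) ^ f b| ≤ K * n := by
  rw [abs_mul, abs_of_nonneg hK]
  gcongr
  calc |∑ b, (-1 : ℝ) ^ f b| ≤ ∑ b, |(-1 : ℝ) ^ f b| := Finset.abs_sum_le_sum_abs _ _
    _ = n := by simp [abs_pow]

theorem card_fun_zmod_two (σ : Type*) [Fintype σ] [DecidableEq σ] :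
    (Fintype.card (σ → ZMod 2) : ℝ) = 2 ^ Fintype.card σ := by
  simp

theorem log_Zf_le {K : ℝ} (hK : 0 ≤ K) :
    log (Zf G e K) ≤ Fintype.card ρ * log 2 + K * n := by
  have hZ : Zf G e K ≤ 2 ^ Fintype.card ρ * exp (K * n) := by
    rw [← card_fun_zmod_two, ← nsmul_eq_mul, ← Finset.card_univ, ← Finset.sum_const]
    exact Finset.sum_le_sum fun _ _ =>
      exp_le_exp.2 ((le_abs_self _).trans (abs_mul_sum_neg_one_pow_le hK _))
  calc log (Zf G e K) ≤ log (2 ^ Fintype.card ρ * exp (K * n)) := log_le_log (Zf_pos_s9 G e K) hZ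
    _ = Fintype.card ρ * log 2 + K * n := by
      rw [log_mul (by positivity) (exp_pos _).ne', log_pow, log_exp]

theorem le_log_Zf {K : ℝ} (hK : 0 ≤ K) :
    Fintype.card ρ * log 2 - K * n ≤ log (Zf G e K) := by
  have hZ : 2 ^ Fintype.card ρ * exp (-(K * n)) ≤ Zf G e K := by
    rw [← card_fun_zmod_two, ← nsmul_eq_mul, ← Finset.card_univ, ← Finset.sum_const]
    exact Finset.sum_le_sum fun _ _ =>
      exp_le_exp.2 (neg_le_of_abs_le (abs_mul_sum_neg_one_pow_le hK _))
  calc Fintype.card ρ * log 2 - K * n = log (2 ^ Fintype.card ρ * exp (-(K * n))) := by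
        rw [log_mul (by positivity) (exp_pos _).ne', log_pow, log_exp]; ring
    _ ≤ log (Zf G e K) := log_le_log (by positivity) hZ

variable {κ : Type*} [Fintype κ] [DecidableEq κ] (Hs : Matrix (ρ ⊕ κ) (Fin n) (ZMod 2))

theorem Zf_le_Zf_of_rows_eq (hrows : ∀ i, Hs (Sum.inl i) = G i) (K : ℝ) :
    Zf G e K ≤ Zf Hs e K := by
  have hvecMul : ∀ α : ρ → ZMod 2, vecMul (Sum.elim α 0) Hs = vecMul α G := fun α => by
    funext b
    simp [vecMul, dotProduct, Fintype.sum_sum_type, hrows]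
  unfold Zf
  rw [← (Equiv.sumArrowEquivProdArrow ρ κ (ZMod 2)).symm.sum_comp, Fintype.sum_prod_type]
  refine Finset.sum_le_sum fun α _ => ?_
  refine le_of_eq_of_le ?_ (Finset.single_le_sum (fun _ _ => (exp_pos _).le) (Finset.mem_univ 0))
  simp [Equiv.sumArrowEquivProdArrow, hvecMul]

theorem deltaF_nonneg (hrows : ∀ i, Hs (Sum.inl i) = G i) (K : ℝ) : 0 ≤ deltaF G Hs e K :=
  sub_nonneg.2 (log_le_log (Zf_pos_s9 G e K) (Zf_le_Zf_of_rows_eq G e Hs hrows K))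

theorem deltaF_le {K : ℝ} (hK : 0 ≤ K) :
    deltaF G Hs e K ≤ Fintype.card κ * log 2 + 2 * K * n := by
  have hHs := log_Zf_le Hs e hK
  have hG := le_log_Zf G e hK
  rw [Fintype.card_sum, Nat.cast_add] at hHs
  unfold deltaF
  linarith

theorem exp_neg_deltaF (K : ℝ) : exp (-deltaF G Hs e K) = Zf G e K / Zf Hs e K := by
  rw [deltaF, neg_sub, exp_sub, exp_log (Zf_pos_s9 _ _ _), exp_log (Zf_pos_s9 _ _ _)]

end PartitionFunction

/-- `e^{-x} ≤ 1 / (1 + x / n)`, and `1 / (1 + y) ≤ 1 - y / (1 + C)` for `y ∈ [0, C]`.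
For `n = 0` the claim reads `e^{-x} ≤ 1`, as `x / 0 = 0`. -/
theorem exp_neg_le_one_sub_inv_mul_div {x C : ℝ} {n : ℕ} (hC : 0 ≤ C) (hx : 0 ≤ x)
    (hxn : x ≤ C * n) : exp (-x) ≤ 1 - (1 + C)⁻¹ * (x / n) := by
  rcases Nat.eq_zero_or_pos n with rfl | hn
  · simpa using hx
  have hn' : (1 : ℝ) ≤ n := by exact_mod_cast hn
  set y := x / n
  have hyC : y ≤ C := div_le_of_le_mul₀ (by positivity) hC hxn
  have hyx : y ≤ x := div_le_self hx hn'
  have hy : 0 ≤ y := by positivity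
  calc exp (-x) ≤ exp (-y) := exp_le_exp.2 (neg_le_neg hyx)
    _ ≤ (1 + y)⁻¹ := by
      rw [exp_neg]; exact inv_anti₀ (by positivity) (by linarith [add_one_le_exp y])
    _ ≤ 1 - (1 + C)⁻¹ * y := by
      rw [inv_le_iff_one_le_mul₀ (by positivity)]
      field_simp
      nlinarith

section DisorderAverage

variable {n : ℕ} {p : ℝ}

theorem davg_const (p a : ℝ) : davg p (fun _ : Fin n → ZMod 2 => a) = a := by
  let w : ZMod 2 → ℝ := fun x => if x = 0 then 1 - p else p
  have hweight : ∀ e : Fin n → ZMod 2,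
      p ^ hammingNorm e * (1 - p) ^ (n - hammingNorm e) = ∏ b, w (e b) := by
    intro e
    have hcard := Finset.card_filter_add_card_filter_not (s := Finset.univ) (fun b => e b ≠ 0)
    simp only [Finset.card_univ, Fintype.card_fin, ne_eq, not_not] at hcard
    simp only [w, Finset.prod_ite, Finset.prod_const, hammingNorm, ne_eq]
    rw [mul_comm]
    congr 2
    omega
  have hw : ∑ x, w x = 1 := by
    rw [show ∑ x, w x = w 0 + w 1 from Fin.sum_univ_two w]
    simp [w]
  calc davg p (fun _ => a) = (∑ e : Fin n → ZMod 2, ∏ b, w (e b)) * a := by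
        simp only [davg, Finset.sum_mul, hweight]
    _ = a := by rw [← Fintype.prod_sum, hw, Finset.prod_const_one, one_mul]

theorem davg_affine (p a b : ℝ) (X : (Fin n → ZMod 2) → ℝ) :
    davg p (fun e => a + b * X e) = a + b * davg p X := by
  nth_rw 2 [← davg_const (n := n) p a]
  simp only [davg, Finset.mul_sum, ← Finset.sum_add_distrib]
  exact Finset.sum_congr rfl fun _ _ => by ring

theorem davg_mono (hp0 : 0 ≤ p) (hp1 : p ≤ 1) {X Y : (Fin n → ZMod 2) → ℝ}
    (h : ∀ e, X e ≤ Y e) : davg p X ≤ davg p Y := by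
  have : 0 ≤ 1 - p := by linarith
  exact Finset.sum_le_sum fun e _ => mul_le_mul_of_nonneg_left (h e) (by positivity)

theorem davg_nonneg (hp0 : 0 ≤ p) (hp1 : p ≤ 1) {X : (Fin n → ZMod 2) → ℝ}
    (h : ∀ e, 0 ≤ X e) : 0 ≤ davg p X := by
  simpa only [davg, mul_zero, Finset.sum_const_zero] using davg_mono hp0 hp1 h

end DisorderAverage

theorem Psucc_le_one_sub_davg_deltaF {ρ κ : Type*} [Fintype ρ] [DecidableEq ρ] [Fintype κ]
    [DecidableEq κ] {n : ℕ} (G : Matrix ρ (Fin n) (ZMod 2)) (Hs : Matrix (ρ ⊕ κ) (Fin n) (ZMod 2))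
    (hrows : ∀ i, Hs (Sum.inl i) = G i) (hκ : Fintype.card κ ≤ n) {K p : ℝ} (hK : 0 ≤ K)
    (hp0 : 0 ≤ p) (hp1 : p ≤ 1) :
    Psucc G Hs K p ≤ 1 - (1 + (log 2 + 2 * K))⁻¹ * (davg p (fun e => deltaF G Hs e K) / n) := by
  have hC : 0 ≤ log 2 + 2 * K := by positivity
  have hdeltaF_le : ∀ e, deltaF G Hs e K ≤ (log 2 + 2 * K) * n := fun e => by
    have hκ' : (Fintype.card κ : ℝ) * log 2 ≤ n * log 2 := by gcongr
    linarith [deltaF_le G e Hs hK]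
  calc Psucc G Hs K p = davg p (fun e => exp (-deltaF G Hs e K)) := by
        simp only [Psucc, exp_neg_deltaF]
    _ ≤ davg p (fun e => 1 + -((1 + (log 2 + 2 * K))⁻¹ / n) * deltaF G Hs e K) :=
        davg_mono hp0 hp1 fun e => (exp_neg_le_one_sub_inv_mul_div hC
          (deltaF_nonneg G e Hs hrows K) (hdeltaF_le e)).trans_eq (by ring)
    _ = _ := by rw [davg_affine]; ring

theorem limsup_lt_of_le_sub_mul {ι : Type*} {l : Filter ι} [l.NeBot] {u a : ι → ℝ} {b c : ℝ}
    (hc : 0 < c) (hu : IsBoundedUnder (· ≥ ·) l u) (ha : IsBoundedUnder (· ≥ ·) l a)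
    (h : ∀ i, u i ≤ b - c * a i) (hpos : 0 < liminf a l) : limsup u l < b := by
  have hev : ∀ᶠ i in l, liminf a l / 2 < a i := eventually_lt_of_lt_liminf (by linarith) ha
  have hle : limsup u l ≤ b - c * (liminf a l / 2) :=
    limsup_le_of_le hu.isCoboundedUnder_le
      (hev.mono fun i hi => (h i).trans (by gcongr))
  have : 0 < c * (liminf a l / 2) := by positivity
  linarith

theorem stmt9_general (rG rH kk nn : ℕ → ℕ)
    (G : ∀ t, Matrix (Fin (rG t)) (Fin (nn t)) (ZMod 2))
    (H : ∀ t, Matrix (Fin (rH t)) (Fin (nn t)) (ZMod 2))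
    (hk : ∀ t, kk t = nn t - (G t).rank - (H t).rank)
    (Hs : ∀ t, Matrix (Fin (rG t) ⊕ Fin (kk t)) (Fin (nn t)) (ZMod 2))
    (hHs : ∀ t, IsAdaptedDual (G t) (H t) (Hs t))
    (K : ℝ) (hK : 0 < K) (p : ℝ) (hp0 : 0 ≤ p) (hp1 : p ≤ 1)
    (hliminf : 0 < Filter.liminf
      (fun t => davg p (fun e => deltaF (G t) (Hs t) e K) / (nn t : ℝ)) atTop) :
    Filter.limsup (fun t => Psucc (G t) (Hs t) K p) atTop < 1 ∧
      ¬ Tendsto (fun t => Psucc (G t) (Hs t) K p) atTop (nhds 1) := by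
  have hbound : ∀ t, Psucc (G t) (Hs t) K p ≤
      1 - (1 + (log 2 + 2 * K))⁻¹ * (davg p (fun e => deltaF (G t) (Hs t) e K) / nn t) :=
    fun t => Psucc_le_one_sub_davg_deltaF (G t) (Hs t) (hHs t).1
      (by rw [Fintype.card_fin, hk t]; omega) hK.le hp0 hp1
  have hPsucc_nonneg : ∀ t, 0 ≤ Psucc (G t) (Hs t) K p := fun t =>
    davg_nonneg hp0 hp1 fun e => div_nonneg (Zf_pos_s9 _ e K).le (Zf_pos_s9 _ e K).le
  have hdavg_nonneg : ∀ t, 0 ≤ davg p (fun e => deltaF (G t) (Hs t) e K) / nn t := fun t =>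
    div_nonneg (davg_nonneg hp0 hp1 fun e => deltaF_nonneg _ e _ (hHs t).1 K) (Nat.cast_nonneg _)
  have hlt := limsup_lt_of_le_sub_mul (by positivity) (isBoundedUnder_of ⟨0, hPsucc_nonneg⟩)
    (isBoundedUnder_of ⟨0, hdavg_nonneg⟩) hbound hliminf
  exact ⟨hlt, fun h => hlt.ne h.limsup_eq⟩

/-- Lemma 1(b): if the disorder-averaged homological difference per bond stays bounded
away from zero, the success probabilities stay bounded away from one. -/
theorem stmt9 (rG rH kk nn : ℕ → ℕ)
    (G : ∀ t, Matrix (Fin (rG t)) (Fin (nn t)) (ZMod 2))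
    (H : ∀ t, Matrix (Fin (rH t)) (Fin (nn t)) (ZMod 2))
    (hGH : ∀ t, G t * (H t)ᵀ = 0)
    (hk : ∀ t, kk t = nn t - (G t).rank - (H t).rank)
    (Hs : ∀ t, Matrix (Fin (rG t) ⊕ Fin (kk t)) (Fin (nn t)) (ZMod 2))
    (hHs : ∀ t, IsAdaptedDual (G t) (H t) (Hs t))
    (hn : Tendsto nn atTop atTop)
    (R : ℝ) (hR : 0 ≤ R)
    (hrate : Tendsto (fun t => (kk t : ℝ) / (nn t : ℝ)) atTop (nhds R))
    (K : ℝ) (hK : 0 < K) (p : ℝ) (hp0 : 0 ≤ p) (hp1 : p ≤ 1)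
    (hliminf : 0 < Filter.liminf
      (fun t => davg p (fun e => deltaF (G t) (Hs t) e K) / (nn t : ℝ)) atTop) :
    Filter.limsup (fun t => Psucc (G t) (Hs t) K p) atTop < 1 ∧
      ¬ Tendsto (fun t => Psucc (G t) (Hs t) K p) atTop (nhds 1) :=
  stmt9_general rG rH kk nn G H hk Hs hHs K hK p hp0 hp1 hliminf
end
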